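/- With e(n) = 2^(2^n), the binomial b_{4n}^{e(n)} c_{4n} f_n + c_{4n} s_n belongs to the ideal ⟨P⟩ of Z2[X], and the binomial b̄_{4n}^{e(n)} c̄_{4n} f̄_n + c̄_{4n} s̄_n belongs to the ideal ⟨P̄⟩. -/
import Mathlib


open MvPolynomial

/-- Monomials in the variables `σ`, represented by their exponent vectors. -/
abbrev Mon (σ : Type*) := σ →₀ ℕ

/-- A monomial order: a total order on monomials such that `1 ≼ t` for every monomial `t`
and `t ≼ u → t·v ≼ u·v` (written additively on exponent vectors). -/
structure MonOrd (σ : Type*) where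
  le : Mon σ → Mon σ → Prop
  le_refl : ∀ t, le t t
  le_trans : ∀ t u v, le t u → le u v → le t v
  le_antisymm : ∀ t u, le t u → le u t → t = u
  le_total : ∀ t u, le t u ∨ le u t
  zero_le : ∀ t, le 0 t
  add_le_add : ∀ t u v, le t u → le (t + v) (u + v)

/-- Strict version of a monomial order. -/
def MonOrd.lt {σ : Type*} (μ : MonOrd σ) (t u : Mon σ) : Prop := μ.le t u ∧ t ≠ u

/-- The extension of a monomial order (given by the relation `r` on monomials) to polynomials:
`g ≼ f` iff `g = f` or the greatest monomial on which `f` and `g` differ occurs in `f`.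
(This is the closed form of the recursive definition: `g ≼ f` iff `g = f`, or
`HT g ≺ HT f`, or `HT g = HT f` and `g - HT g ≼ f - HT f`, with `0` the least polynomial.) -/
def polyLe {σ : Type*} (r : Mon σ → Mon σ → Prop) (g f : MvPolynomial σ (ZMod 2)) : Prop :=
  g = f ∨ ∃ t, t ∈ f.support ∧ t ∉ g.support ∧
    ∀ u : Mon σ, ((u ∈ f.support ∧ u ∉ g.support) ∨ (u ∈ g.support ∧ u ∉ f.support)) → r u t

/-- Strict extension of a monomial order to polynomials. -/
def polyLt {σ : Type*} (r : Mon σ → Mon σ → Prop) (g f : MvPolynomial σ (ZMod 2)) : Prop :=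
  polyLe r g f ∧ g ≠ f

/-- `S_F`: the set of non-residual polynomials with respect to `F` and the monomial order `r`,
i.e. those `f` admitting a `g` with `f + g ∈ ⟨F⟩` and `g ≺ f`. -/
def SF {σ : Type*} (r : Mon σ → Mon σ → Prop) (F : Set (MvPolynomial σ (ZMod 2))) :
    Set (MvPolynomial σ (ZMod 2)) :=
  {f | ∃ g, f + g ∈ Ideal.span F ∧ polyLt r g f}

/-- `t` is the head monomial (`r`-greatest monomial) of the polynomial `f`. -/
def IsHT {σ : Type*} (r : Mon σ → Mon σ → Prop) (f : MvPolynomial σ (ZMod 2)) (t : Mon σ) :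
    Prop :=
  t ∈ f.support ∧ ∀ u ∈ f.support, r u t

/-- `HT(S)`: the set of head monomials (as polynomials) of the nonzero elements of `S`. -/
def HTset {σ : Type*} (r : Mon σ → Mon σ → Prop) (S : Set (MvPolynomial σ (ZMod 2))) :
    Set (MvPolynomial σ (ZMod 2)) :=
  {p | ∃ f ∈ S, f ≠ 0 ∧ ∃ t, IsHT r f t ∧ p = monomial t 1}

/-- The divisibility (componentwise) order `◁` on monomials. -/
def triMon {σ : Type*} (t u : Mon σ) : Prop := ∀ x, t x ≤ u x

/-- The order `◁` on polynomials: `p ◁ q` iff there is an injective map `φ` from the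
monomials of `p` to the monomials of `q` with `t ◁ φ t` for each monomial `t` of `p`. -/
def triPoly {σ : Type*} (p q : MvPolynomial σ (ZMod 2)) : Prop :=
  ∃ φ : Mon σ → Mon σ, Set.InjOn φ ↑p.support ∧ ∀ t ∈ p.support, φ t ∈ q.support ∧ triMon t (φ t)

/-- Upward closure with respect to `◁`. -/
def upClo {σ : Type*} (A : Set (MvPolynomial σ (ZMod 2))) : Set (MvPolynomial σ (ZMod 2)) :=
  {q | ∃ p ∈ A, triPoly p q}

/-- `Min_◁(A)`: the `◁`-minimal elements of `A`. -/
def minTri {σ : Type*} (A : Set (MvPolynomial σ (ZMod 2))) : Set (MvPolynomial σ (ZMod 2)) :=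
  {p | p ∈ A ∧ ∀ q ∈ A, triPoly q p → q = p}

/-- `G` is a Gröbner basis of the ideal `I` with respect to the monomial order `r`. -/
def IsGB {σ : Type*} (r : Mon σ → Mon σ → Prop) (G : Finset (MvPolynomial σ (ZMod 2)))
    (I : Ideal (MvPolynomial σ (ZMod 2))) : Prop :=
  (↑G : Set (MvPolynomial σ (ZMod 2))) ⊆ ↑I ∧
    Ideal.span (↑G : Set (MvPolynomial σ (ZMod 2))) = I ∧
    Ideal.span (HTset r (↑I : Set (MvPolynomial σ (ZMod 2)))) = Ideal.span (HTset r ↑G)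

/-- `G` is a reduced Gröbner basis of `I` with respect to `r`. -/
def IsReducedGB {σ : Type*} (r : Mon σ → Mon σ → Prop) (G : Finset (MvPolynomial σ (ZMod 2)))
    (I : Ideal (MvPolynomial σ (ZMod 2))) : Prop :=
  IsGB r G I ∧ ∀ f ∈ G, ¬ ∀ t ∈ f.support,
    (monomial t 1 : MvPolynomial σ (ZMod 2)) ∈
      Ideal.span (HTset r ((↑G : Set (MvPolynomial σ (ZMod 2))) \ {f}))

/-- The variable set `X`: the special variables `s, ℓ, c, c̄, b, b̄` together with, for each
`0 ≤ i ≤ n`, the variables `s_i, f_i, q_{ji}, c_{ji}, b_{ji}` (`1 ≤ j ≤ 4`, encoded by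
`j : Fin 4`) and their barred copies (`bar = true`). -/
inductive MVar (n : ℕ) : Type where
  | vs | vl | vc | vcb | vb | vbb
  | vS (bar : Bool) (i : Fin (n+1))
  | vF (bar : Bool) (i : Fin (n+1))
  | vQ (bar : Bool) (j : Fin 4) (i : Fin (n+1))
  | vC (bar : Bool) (j : Fin 4) (i : Fin (n+1))
  | vB (bar : Bool) (j : Fin 4) (i : Fin (n+1))
deriving DecidableEq

open MVar

abbrev MPoly (n : ℕ) := MvPolynomial (MVar n) (ZMod 2)

/-- `e(n) = 2^(2^n)`. -/
def en (n : ℕ) : ℕ := 2 ^ 2 ^ n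

/-- The set `P_0` (barred copy if `bar = true`). -/
def P0 (n : ℕ) (bar : Bool) : Set (MPoly n) :=
  {p | ∃ j : Fin 4, p =
    X (vB bar j 0) ^ 2 * X (vC bar j 0) * X (vF bar 0) + X (vC bar j 0) * X (vS bar 0)}

/-- The set `P_m` for `m = i+1`, `i : Fin n` (barred copy if `bar = true`).
Here `i.succ` plays the role of `m` and `i.castSucc` the role of `m-1`; the indices
`1,2,3,4` of the paper are encoded as `0,1,2,3 : Fin 4`. -/
def Pm (n : ℕ) (bar : Bool) (i : Fin n) : Set (MPoly n) :=
  ({ X (vQ bar 0 i.succ) * X (vC bar 0 i.castSucc) * X (vS bar i.castSucc) + X (vS bar i.succ),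
    X (vQ bar 1 i.succ) * X (vC bar 1 i.castSucc) * X (vS bar i.castSucc)
      + X (vQ bar 0 i.succ) * X (vB bar 0 i.castSucc) * X (vC bar 0 i.castSucc)
        * X (vF bar i.castSucc),
    X (vQ bar 2 i.succ) * X (vC bar 2 i.castSucc) * X (vF bar i.castSucc)
      + X (vQ bar 1 i.succ) * X (vC bar 1 i.castSucc) * X (vF bar i.castSucc),
    X (vQ bar 2 i.succ) * X (vB bar 0 i.castSucc) * X (vC bar 2 i.castSucc)
        * X (vS bar i.castSucc)
      + X (vQ bar 1 i.succ) * X (vB bar 3 i.castSucc) * X (vC bar 1 i.castSucc)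
        * X (vS bar i.castSucc),
    X (vQ bar 3 i.succ) * X (vB bar 3 i.castSucc) * X (vC bar 3 i.castSucc)
        * X (vF bar i.castSucc)
      + X (vQ bar 2 i.succ) * X (vC bar 2 i.castSucc) * X (vS bar i.castSucc),
    X (vQ bar 3 i.succ) * X (vC bar 3 i.castSucc) * X (vS bar i.castSucc)
      + X (vF bar i.succ) } : Set (MPoly n))
  ∪ {p | ∃ j : Fin 4, p =
      X (vQ bar 1 i.succ) * X (vB bar 2 i.castSucc) * X (vB bar j i.succ) * X (vC bar j i.succ)
          * X (vF bar i.castSucc)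
        + X (vQ bar 1 i.succ) * X (vB bar 1 i.castSucc) * X (vC bar j i.succ)
          * X (vF bar i.castSucc)}

/-- The set `P = P_0 ∪ P_1 ∪ ⋯ ∪ P_n`; for `bar = true` this is the barred copy `P̄`
(the image of `P` under the substitution replacing each variable by its barred version). -/
def PP (n : ℕ) (bar : Bool) : Set (MPoly n) := P0 n bar ∪ ⋃ i : Fin n, Pm n bar i

/-- The set `G` of seven extra binomials. -/
def GG (n : ℕ) : Set (MPoly n) :=
  { X (vB false 3 (Fin.last n)) * X vl * X vb + X vl * X vc,
    X (vB false 3 (Fin.last n)) * X vl * X vbb + X vl * X vcb,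
    X (vC false 3 (Fin.last n)) * X (vF false (Fin.last n)) + X vl,
    X (vC true 3 (Fin.last n)) * X (vF true (Fin.last n))
      + X (vC false 3 (Fin.last n)) * X (vS false (Fin.last n)),
    X (vB true 3 (Fin.last n)) * X (vC false 3 (Fin.last n)) * X (vS false (Fin.last n))
      + X (vC false 3 (Fin.last n)) * X (vS false (Fin.last n)) * X vb,
    X (vB true 3 (Fin.last n)) * X (vC false 3 (Fin.last n)) * X (vS false (Fin.last n))
      + X (vC false 3 (Fin.last n)) * X (vS false (Fin.last n)) * X vbb,
    X (vC true 3 (Fin.last n)) * X (vS true (Fin.last n)) + X vs }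

/-- The set `𝓕 = P ∪ P̄ ∪ G`. -/
def FF (n : ℕ) : Set (MPoly n) := PP n false ∪ PP n true ∪ GG n

/-- The set `C = {ℓ c̄^{m1} c^{m2} : m1 + m2 = e(n)}` of monomials. -/
def Cmon (n : ℕ) : Set (Mon (MVar n)) :=
  {α | ∃ m1 m2 : ℕ, m1 + m2 = en n ∧
    α = Finsupp.single vl 1 + Finsupp.single vcb m1 + Finsupp.single vc m2}

/-- The set `D = {ℓ^j c̄^{m1} c^{m2} : j ∈ {0,1}, j + m1 + m2 ≤ e(n)}` of monomials. -/
def Dmon (n : ℕ) : Set (Mon (MVar n)) :=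
  {α | ∃ j m1 m2 : ℕ, j ≤ 1 ∧ j + m1 + m2 ≤ en n ∧
    α = Finsupp.single vl j + Finsupp.single vcb m1 + Finsupp.single vc m2}

/-- An injective rank function on the variables realizing the variable ordering
(from least to greatest): `s, c, c̄, ℓ, b, b̄`; then `s_0,…,s_n`; `f_0,…,f_n`;
`c_{10},…,c_{1n}; …; c_{40},…,c_{4n}`; `b_{10},…,b_{4n}`; `q_{10},…,q_{4n}`;
then the barred variables in the same pattern. -/
def vrank (n : ℕ) : MVar n → ℕ
  | .vs => 0
  | .vc => 1
  | .vcb => 2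
  | .vl => 3
  | .vb => 4
  | .vbb => 5
  | .vS bar i => 6 + (cond bar (14 * (n+1)) 0) + (i : ℕ)
  | .vF bar i => 6 + (cond bar (14 * (n+1)) 0) + (n+1) + (i : ℕ)
  | .vC bar j i => 6 + (cond bar (14 * (n+1)) 0) + 2*(n+1) + (j : ℕ)*(n+1) + (i : ℕ)
  | .vB bar j i => 6 + (cond bar (14 * (n+1)) 0) + 6*(n+1) + (j : ℕ)*(n+1) + (i : ℕ)
  | .vQ bar j i => 6 + (cond bar (14 * (n+1)) 0) + 10*(n+1) + (j : ℕ)*(n+1) + (i : ℕ)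

/-- The lexicographic monomial order on `X`: `t ≼_lex u` iff `t = u` or the exponents differ
somewhere and at the greatest variable (w.r.t. `vrank`) where they differ, the exponent of
`t` is smaller. -/
def lexLe (n : ℕ) (t u : Mon (MVar n)) : Prop :=
  t = u ∨ ∃ x : MVar n, t x < u x ∧ ∀ y : MVar n, vrank n x < vrank n y → t y = u y

/-- The total degree of a monomial. -/
def mdeg {σ : Type*} (t : Mon σ) : ℕ := t.sum fun _ k => k

/-- The degree lexicographic monomial order. -/
def degLexLe (n : ℕ) (t u : Mon (MVar n)) : Prop :=
  mdeg t < mdeg u ∨ (mdeg t = mdeg u ∧ lexLe n t u)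

/-- Weighted degree of a monomial with respect to a weight map `w`. -/
noncomputable def wdeg {n : ℕ} (w : MVar n → ℝ) (t : Mon (MVar n)) : ℝ :=
  t.sum fun x k => (k : ℝ) * w x

/-- The weighted monomial order determined by the weight map `w`. -/
def wLe {n : ℕ} (w : MVar n → ℝ) (t u : Mon (MVar n)) : Prop := t = u ∨ wdeg w t < wdeg w u


private theorem ringStep {Q : Type*} [CommRing Q]
    {q1 q2 q3 q4 b1 b2 b3 b4 c1 c2 c3 c4 s f Bj Cj Sm Fm : Q} {K : ℕ}
    (g1 : q1*c1*s = Sm)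
    (g2 : q2*c2*s = q1*b1*c1*f)
    (g3 : q3*c3*f = q2*c2*f)
    (g4 : q3*b1*c3*s = q2*b4*c2*s)
    (g5 : q4*b4*c4*f = q3*c3*s)
    (g6 : q4*c4*s = Fm)
    (g7 : q2*b3*Bj*Cj*f = q2*b2*Cj*f)
    (ih1 : b1^(K+1)*c1*f = c1*s) (ih2 : b2^(K+1)*c2*f = c2*s)
    (ih3 : b3^(K+1)*c3*f = c3*s) (ih4 : b4^(K+1)*c4*f = c4*s) :
    Bj^((K+1)*(K+1))*Cj*Fm = Cj*Sm := by
  have L7 : ∀ t : ℕ, q2*b2^t*Cj*f = q2*(b3*Bj)^t*Cj*f := by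
    intro t
    induction t with
    | zero => ring
    | succ t ih => linear_combination b3*Bj*ih - b2^t*g7
  have L : ∀ t : ℕ, Cj*q3*b1^t*c3*s = Cj*q3*b4^t*Bj^(t*(K+1))*c3*s := by
    intro t
    induction t with
    | zero => norm_num
    | succ t ih =>
      calc Cj*q3*b1^(t+1)*c3*s
          = Cj*q2*b1^t*b4*c2*s := by linear_combination Cj*b1^t*g4
        _ = Cj*q2*b1^t*b4*b2^(K+1)*c2*f := by linear_combination -(Cj*q2*b1^t*b4)*ih2
        _ = Cj*q2*b1^t*b4*b3^(K+1)*Bj^(K+1)*c2*f := by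
            linear_combination (b1^t*b4*c2)*(L7 (K+1))
        _ = Cj*q3*b1^t*b4*b3^(K+1)*Bj^(K+1)*c3*f := by
            linear_combination -(Cj*b1^t*b4*b3^(K+1)*Bj^(K+1))*g3
        _ = Cj*q3*b1^t*b4*Bj^(K+1)*c3*s := by linear_combination (Cj*q3*b1^t*b4*Bj^(K+1))*ih3
        _ = Cj*q3*b4^(t+1)*Bj^((t+1)*(K+1))*c3*s := by linear_combination (b4*Bj^(K+1))*ih
  calc Bj^((K+1)*(K+1))*Cj*Fm
      = Cj*q4*Bj^(K*(K+1)+(K+1))*c4*s := by linear_combination -(Cj*Bj^(K*(K+1)+(K+1)))*g6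
    _ = Cj*q4*b4^(K+1)*Bj^(K*(K+1)+(K+1))*c4*f := by
        linear_combination -(Cj*q4*Bj^(K*(K+1)+(K+1)))*ih4
    _ = Cj*q3*b4^K*Bj^(K*(K+1)+(K+1))*c3*s := by
        linear_combination (Cj*b4^K*Bj^(K*(K+1)+(K+1)))*g5
    _ = Cj*q3*b1^K*Bj^(K+1)*c3*s := by linear_combination -(Bj^(K+1))*(L K)
    _ = Cj*q3*b1^K*b3^(K+1)*Bj^(K+1)*c3*f := by linear_combination -(Cj*q3*b1^K*Bj^(K+1))*ih3
    _ = Cj*q2*b1^K*b3^(K+1)*Bj^(K+1)*c2*f := by linear_combination (Cj*b1^K*b3^(K+1)*Bj^(K+1))*g3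
    _ = Cj*q2*b1^K*b2^(K+1)*c2*f := by linear_combination -(b1^K*c2)*(L7 (K+1))
    _ = Cj*q2*b1^K*c2*s := by linear_combination (Cj*q2*b1^K)*ih2
    _ = Cj*q1*b1^(K+1)*c1*f := by linear_combination (Cj*b1^K)*g2
    _ = Cj*q1*c1*s := by linear_combination (Cj*q1)*ih1
    _ = Cj*Sm := by linear_combination Cj*g1

private theorem mk_eq_of_add_mem {n : ℕ} {I : Ideal (MPoly n)} {a b : MPoly n}
    (h : a + b ∈ I) : Ideal.Quotient.mk I a = Ideal.Quotient.mk I b :=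
  Ideal.Quotient.eq.mpr (by rw [CharTwo.sub_eq_add]; exact h)

private theorem add_mem_of_mk_eq {n : ℕ} {I : Ideal (MPoly n)} {a b : MPoly n}
    (h : Ideal.Quotient.mk I a = Ideal.Quotient.mk I b) : a + b ∈ I := by
  rw [← CharTwo.sub_eq_add]; exact Ideal.Quotient.eq.mp h

private theorem memPm {n : ℕ} {bar : Bool} {i : Fin n} {p : MPoly n}
    (hp : p ∈ Pm n bar i) : p ∈ Ideal.span (PP n bar) :=
  Ideal.subset_span (Set.mem_union_right _ (Set.mem_iUnion_of_mem i hp))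

open MVar in
private theorem keyLemma (n : ℕ) (bar : Bool) : ∀ (i : Fin (n+1)) (j : Fin 4),
    Ideal.Quotient.mk (Ideal.span (PP n bar))
      (X (vB bar j i) ^ 2 ^ 2 ^ (i : ℕ) * X (vC bar j i) * X (vF bar i))
    = Ideal.Quotient.mk (Ideal.span (PP n bar)) (X (vC bar j i) * X (vS bar i)) := by
  intro i
  induction i using Fin.induction with
  | zero =>
    intro j
    apply mk_eq_of_add_mem
    apply Ideal.subset_span
    apply Set.mem_union_left
    exact ⟨j, by norm_num⟩
  | succ i ih =>
    intro j
    obtain ⟨K, hK⟩ : ∃ K : ℕ, 2 ^ 2 ^ (i : ℕ) = K + 1 :=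
      ⟨2 ^ 2 ^ (i : ℕ) - 1, (Nat.succ_pred_eq_of_pos (by positivity)).symm⟩
    have hexp : 2 ^ 2 ^ ((i.succ : Fin (n+1)) : ℕ) = (K+1)*(K+1) := by
      rw [Fin.val_succ, pow_succ, pow_mul, hK]; ring
    have m1 : (X (vQ bar 0 i.succ) * X (vC bar 0 i.castSucc) * X (vS bar i.castSucc)
        + X (vS bar i.succ) : MPoly n) ∈ Pm n bar i :=
      Set.mem_union_left _ (by left; rfl)
    have m2 : (X (vQ bar 1 i.succ) * X (vC bar 1 i.castSucc) * X (vS bar i.castSucc)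
        + X (vQ bar 0 i.succ) * X (vB bar 0 i.castSucc) * X (vC bar 0 i.castSucc)
          * X (vF bar i.castSucc) : MPoly n) ∈ Pm n bar i :=
      Set.mem_union_left _ (by right; left; rfl)
    have m3 : (X (vQ bar 2 i.succ) * X (vC bar 2 i.castSucc) * X (vF bar i.castSucc)
        + X (vQ bar 1 i.succ) * X (vC bar 1 i.castSucc) * X (vF bar i.castSucc) : MPoly n)
        ∈ Pm n bar i :=
      Set.mem_union_left _ (by right; right; left; rfl)
    have m4 : (X (vQ bar 2 i.succ) * X (vB bar 0 i.castSucc) * X (vC bar 2 i.castSucc)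
          * X (vS bar i.castSucc)
        + X (vQ bar 1 i.succ) * X (vB bar 3 i.castSucc) * X (vC bar 1 i.castSucc)
          * X (vS bar i.castSucc) : MPoly n) ∈ Pm n bar i :=
      Set.mem_union_left _ (by right; right; right; left; rfl)
    have m5 : (X (vQ bar 3 i.succ) * X (vB bar 3 i.castSucc) * X (vC bar 3 i.castSucc)
          * X (vF bar i.castSucc)
        + X (vQ bar 2 i.succ) * X (vC bar 2 i.castSucc) * X (vS bar i.castSucc) : MPoly n)
        ∈ Pm n bar i :=
      Set.mem_union_left _ (by right; right; right; right; left; rfl)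
    have m6 : (X (vQ bar 3 i.succ) * X (vC bar 3 i.castSucc) * X (vS bar i.castSucc)
        + X (vF bar i.succ) : MPoly n) ∈ Pm n bar i :=
      Set.mem_union_left _ (by right; right; right; right; right; rfl)
    have m7 : (X (vQ bar 1 i.succ) * X (vB bar 2 i.castSucc) * X (vB bar j i.succ)
          * X (vC bar j i.succ) * X (vF bar i.castSucc)
        + X (vQ bar 1 i.succ) * X (vB bar 1 i.castSucc) * X (vC bar j i.succ)
          * X (vF bar i.castSucc) : MPoly n) ∈ Pm n bar i :=
      Set.mem_union_right _ ⟨j, rfl⟩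
    have e1 := mk_eq_of_add_mem (memPm m1)
    have e2 := mk_eq_of_add_mem (memPm m2)
    have e3 := mk_eq_of_add_mem (memPm m3)
    have e4 := mk_eq_of_add_mem (memPm m4)
    have e5 := mk_eq_of_add_mem (memPm m5)
    have e6 := mk_eq_of_add_mem (memPm m6)
    have e7 := mk_eq_of_add_mem (memPm m7)
    have i1 := ih 0
    have i2 := ih 1
    have i3 := ih 2
    have i4 := ih 3
    simp only [map_mul, map_pow, Fin.coe_castSucc, hK] at e1 e2 e3 e4 e5 e6 e7 i1 i2 i3 i4
    rw [hexp]
    simp only [map_mul, map_pow]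
    exact ringStep e1 e2 e3 e4 e5 e6 e7 i1 i2 i3 i4


open MVar in
/-- `b_{4n}^{e(n)} c_{4n} f_n + c_{4n} s_n ∈ ⟨P⟩` and
`b̄_{4n}^{e(n)} c̄_{4n} f̄_n + c̄_{4n} s̄_n ∈ ⟨P̄⟩`. -/
theorem stmt5 (n : ℕ) :
    (X (vB false 3 (Fin.last n)) ^ en n * X (vC false 3 (Fin.last n)) * X (vF false (Fin.last n))
        + X (vC false 3 (Fin.last n)) * X (vS false (Fin.last n)) : MPoly n)
      ∈ Ideal.span (PP n false) ∧
    (X (vB true 3 (Fin.last n)) ^ en n * X (vC true 3 (Fin.last n)) * X (vF true (Fin.last n))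
        + X (vC true 3 (Fin.last n)) * X (vS true (Fin.last n)) : MPoly n)
      ∈ Ideal.span (PP n true) := by
  have h : ∀ bar : Bool,
      (X (vB bar 3 (Fin.last n)) ^ en n * X (vC bar 3 (Fin.last n)) * X (vF bar (Fin.last n))
        + X (vC bar 3 (Fin.last n)) * X (vS bar (Fin.last n)) : MPoly n)
      ∈ Ideal.span (PP n bar) := by
    intro bar
    apply add_mem_of_mk_eq
    have := keyLemma n bar (Fin.last n) 3
    rw [Fin.val_last] at this
    rw [show en n = 2 ^ 2 ^ n from rfl]
    exact this
  exact ⟨h false, h true⟩
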